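/- For the constrained PI closed-loop system ẋ = B sat(−Bᵀ∇H(x) − x_c; u⁻, u⁺), ẋ_c = Bᵀ∇H(x), the function V(x, x_c) = 𝟙ₘᵀ S(−Bᵀ∇H(x) − x_c; u⁻, u⁺) + H(x) satisfies d/dt V = −‖B sat(−Bᵀ∇H(x) − x_c; u⁻, u⁺)‖² ≤ 0 along solutions, where S(·; u⁻, u⁺)ᵢ(w) = ∫₀^{wᵢ} sat(y; u⁻ᵢ, u⁺ᵢ) dy. -/

import Mathlib

/-!
Along a solution put `w = −Bᵀ∇H(x) − x_c` and `σ = sat(w)`. Since `S` has gradient `sat`,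
`d/dt 𝟙ᵀS(w) = σ ⬝ ẇ = σ ⬝ (−BᵀBσ − Bᵀ∇H(x))`, while `d/dt H(x) = ∇H(x) ⬝ Bσ`.
Moving `Bᵀ` across the dot product, the two `∇H` terms cancel and `−‖Bσ‖²` remains.
-/

open Matrix

noncomputable def satFn (x a b : ℝ) : ℝ := max a (min b x)

/-- `Sint a b x = ∫₀ˣ sat(y; a, b) dy`, the component of the paper's `S(·; u⁻, u⁺)`. -/
noncomputable def Sint (a b x : ℝ) : ℝ := ∫ y in (0 : ℝ)..x, satFn y a b

noncomputable def dotCLM {ι : Type} [Fintype ι] (g : ι → ℝ) : (ι → ℝ) →L[ℝ] ℝ :=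
  LinearMap.toContinuousLinearMap
    (∑ i : ι, g i • (LinearMap.proj i : (ι → ℝ) →ₗ[ℝ] ℝ))

theorem continuous_satFn (a b : ℝ) : Continuous fun y => satFn y a b :=
  continuous_const.max (continuous_const.min continuous_id)

theorem hasDerivAt_Sint (a b x : ℝ) : HasDerivAt (Sint a b) (satFn x a b) x :=
  ((continuous_satFn a b).integral_hasStrictDerivAt 0 x).hasDerivAt

section Curves

variable {ι κ : Type} [Fintype ι] [Fintype κ] {t : ℝ}

theorem dotCLM_apply (g v : ι → ℝ) : dotCLM g v = g ⬝ᵥ v := by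
  simp [dotCLM, dotProduct]

theorem HasFDerivAt.comp_hasDerivAt_dotCLM {H : (ι → ℝ) → ℝ} {g : ι → ℝ}
    {x : ℝ → ι → ℝ} {x' : ι → ℝ} (hH : HasFDerivAt H (dotCLM g) (x t))
    (hx : HasDerivAt x x' t) : HasDerivAt (fun s => H (x s)) (g ⬝ᵥ x') t := by
  have h := hH.comp_hasDerivAt t hx
  rw [dotCLM_apply] at h
  exact h

theorem HasDerivAt.const_mulVec (A : Matrix κ ι ℝ) {f : ℝ → ι → ℝ} {f' : ι → ℝ}
    (hf : HasDerivAt f f' t) : HasDerivAt (fun s => A *ᵥ f s) (A *ᵥ f') t :=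
  (mulVecLin A).toContinuousLinearMap.hasFDerivAt.comp_hasDerivAt t hf

theorem HasDerivAt.sum_Sint {a b : ι → ℝ} {w : ℝ → ι → ℝ} {w' : ι → ℝ}
    (hw : HasDerivAt w w' t) :
    HasDerivAt (fun s => ∑ i, Sint (a i) (b i) (w s i))
      ((fun i => satFn (w t i) (a i) (b i)) ⬝ᵥ w') t :=
  HasDerivAt.fun_sum fun i _ => (hasDerivAt_Sint _ _ _).comp t (hasDerivAt_pi.mp hw i)

end Curves

theorem dotProduct_neg_transpose_mulVec_add {R V E : Type*} [CommRing R] [Fintype V]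
    [Fintype E] (B : Matrix V E R) (σ : E → R) (g : V → R) :
    σ ⬝ᵥ (-(Bᵀ *ᵥ (B *ᵥ σ)) - Bᵀ *ᵥ g) + g ⬝ᵥ (B *ᵥ σ) = -((B *ᵥ σ) ⬝ᵥ (B *ᵥ σ)) := by
  have hT : ∀ u : V → R, σ ⬝ᵥ (Bᵀ *ᵥ u) = (B *ᵥ σ) ⬝ᵥ u := fun u => by
    rw [dotProduct_mulVec, vecMul_transpose]
  rw [dotProduct_sub, dotProduct_neg, hT, hT, dotProduct_comm g]
  ring

theorem stmt_15_general {V E : Type} [Fintype V] [Fintype E]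
    (B : Matrix V E ℝ)
    (uminus uplus : E → ℝ)
    (H : (V → ℝ) → ℝ)
    (gradH : (V → ℝ) → (V → ℝ))
    (hH : ∀ p, HasFDerivAt H (dotCLM (gradH p)) p)
    (x : ℝ → V → ℝ) (xc : ℝ → E → ℝ)
    (hx : ∀ t, HasDerivAt x
      (B.mulVec fun e => satFn (-(Bᵀ.mulVec (gradH (x t)) e) - xc t e) (uminus e) (uplus e)) t)
    (hxc : ∀ t, HasDerivAt xc (Bᵀ.mulVec (gradH (x t))) t)
    (hgx : ∀ t, HasDerivAt (fun s => gradH (x s))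
      (B.mulVec fun e => satFn (-(Bᵀ.mulVec (gradH (x t)) e) - xc t e) (uminus e) (uplus e)) t) :
    ∀ t : ℝ,
      HasDerivAt
        (fun s => (∑ e : E, Sint (uminus e) (uplus e) (-(Bᵀ.mulVec (gradH (x s)) e) - xc s e))
          + H (x s))
        (-((B.mulVec fun e => satFn (-(Bᵀ.mulVec (gradH (x t)) e) - xc t e) (uminus e) (uplus e))
          ⬝ᵥ (B.mulVec fun e => satFn (-(Bᵀ.mulVec (gradH (x t)) e) - xc t e) (uminus e) (uplus e)))) t ∧
      -((B.mulVec fun e => satFn (-(Bᵀ.mulVec (gradH (x t)) e) - xc t e) (uminus e) (uplus e))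
          ⬝ᵥ (B.mulVec fun e => satFn (-(Bᵀ.mulVec (gradH (x t)) e) - xc t e) (uminus e) (uplus e))) ≤ 0 := by
  intro t
  have hw : HasDerivAt (fun s => -(Bᵀ *ᵥ gradH (x s)) - xc s) _ t :=
    ((hgx t).const_mulVec Bᵀ).neg.sub (hxc t)
  have hV := hw.sum_Sint (a := uminus) (b := uplus) |>.add
    ((hH (x t)).comp_hasDerivAt_dotCLM (hx t))
  exact ⟨hV.congr_deriv (dotProduct_neg_transpose_mulVec_add _ _ _),
    neg_nonpos.mpr (dotProduct_self_star_nonneg _)⟩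

/-- for the constrained PI closed loop
`ẋ = B sat(−Bᵀ∇H(x) − x_c; u⁻, u⁺)`, `ẋ_c = Bᵀ∇H(x)`, the function
`V(x, x_c) = 𝟙ₘᵀ S(−Bᵀ∇H(x) − x_c; u⁻, u⁺) + H(x)` satisfies
`d/dt V = −‖B sat(−Bᵀ∇H(x) − x_c; u⁻, u⁺)‖² ≤ 0` along solutions.
(The hypothesis `hgx` records the chain rule `d/dt ∇H(x(t)) = ẋ(t)`.) -/
theorem stmt_15 {V E : Type} [Fintype V] [Fintype E] [DecidableEq V] [DecidableEq E]
    (head tail : E → V)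
    (B : Matrix V E ℝ)
    (hB : ∀ v e, B v e = (if head e = v then (1 : ℝ) else 0) - (if tail e = v then 1 else 0))
    (uminus uplus : E → ℝ) (hu : ∀ e, uminus e ≤ 0 ∧ 0 < uplus e)
    (H : (V → ℝ) → ℝ) (hH2 : ContDiff ℝ 2 H)
    (gradH : (V → ℝ) → (V → ℝ))
    (hH : ∀ p, HasFDerivAt H (dotCLM (gradH p)) p)
    (x : ℝ → V → ℝ) (xc : ℝ → E → ℝ)
    (hx : ∀ t, HasDerivAt x
      (B.mulVec fun e => satFn (-(Bᵀ.mulVec (gradH (x t)) e) - xc t e) (uminus e) (uplus e)) t)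
    (hxc : ∀ t, HasDerivAt xc (Bᵀ.mulVec (gradH (x t))) t)
    (hgx : ∀ t, HasDerivAt (fun s => gradH (x s))
      (B.mulVec fun e => satFn (-(Bᵀ.mulVec (gradH (x t)) e) - xc t e) (uminus e) (uplus e)) t) :
    ∀ t : ℝ,
      HasDerivAt
        (fun s => (∑ e : E, Sint (uminus e) (uplus e) (-(Bᵀ.mulVec (gradH (x s)) e) - xc s e))
          + H (x s))
        (-((B.mulVec fun e => satFn (-(Bᵀ.mulVec (gradH (x t)) e) - xc t e) (uminus e) (uplus e))
          ⬝ᵥ (B.mulVec fun e => satFn (-(Bᵀ.mulVec (gradH (x t)) e) - xc t e) (uminus e) (uplus e)))) t ∧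
      -((B.mulVec fun e => satFn (-(Bᵀ.mulVec (gradH (x t)) e) - xc t e) (uminus e) (uplus e))
          ⬝ᵥ (B.mulVec fun e => satFn (-(Bᵀ.mulVec (gradH (x t)) e) - xc t e) (uminus e) (uplus e))) ≤ 0 :=
  stmt_15_general B uminus uplus H gradH hH x xc hx hxc hgx
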